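/- arXiv:2501.07803 — 4 statements merged into one kernel-verified Lean document; each statement's English description precedes it below -/
import Mathlib

section
/- For four distinct indices p, q, r, s, the linear dependence identity A⁺_{pq} A⁺_{rs} + A⁺_{pr} A⁺_{qs} + A⁺_{ps} A⁺_{qr} = 0 holds among products of open-shell singlet pair creators. -/
/-- Linear dependence identity among products of open-shell singlet pair creators:
A⁺_{pq}A⁺_{rs} + A⁺_{pr}A⁺_{qs} + A⁺_{ps}A⁺_{qr} = 0 for distinct p, q, r, s. -/
theorem open_shell_pair_linear_dependence
    {I : Type*} [DecidableEq I] {A : Type*} [Ring A] [Algebra ℂ A]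
    (cr : I → Bool → A)
    (ccr : ∀ p σ q τ, cr p σ * cr q τ + cr q τ * cr p σ = 0)
    (Ap : I → I → A)
    (hAp : ∀ p q, Ap p q =
      ((Real.sqrt 2 : ℂ))⁻¹ • (cr p true * cr q false - cr p false * cr q true)) :
    ∀ p q r s : I, p ≠ q → p ≠ r → p ≠ s → q ≠ r → q ≠ s → r ≠ s →
      Ap p q * Ap r s + Ap p r * Ap q s + Ap p s * Ap q r = 0 := by
  intro p q r s _ _ _ _ _ _
  have swE : ∀ p σ q τ, cr p σ * cr q τ = -(cr q τ * cr p σ) := fun p σ q τ =>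
    eq_neg_of_add_eq_zero_left (ccr p σ q τ)
  have sw : ∀ p σ q τ (b : A), cr p σ * (cr q τ * b) = -(cr q τ * (cr p σ * b)) := by
    intro p σ q τ b
    rw [← mul_assoc, swE p σ q τ, neg_mul, mul_assoc]
  simp only [hAp]
  rw [smul_mul_smul_comm, smul_mul_smul_comm, smul_mul_smul_comm, ← smul_add, ← smul_add]
  convert smul_zero _
  simp only [mul_sub, sub_mul, mul_assoc]
  rw [sw r false q true, sw r false q false, sw r true q true, sw r true q false,
      sw s false q true, sw s false q false, sw s true q true, sw s true q false,
      swE s false r false, swE s false r true, swE s true r false, swE s true r true]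
  simp only [mul_neg, neg_neg]
  abel
end

section
/- For four distinct single-particle indices a < b < c < d, the two vectors |φ⁽¹⁾⟩ = A⁺_{ab}A⁺_{cd}|θ⟩ and |φ⁽²⁾⟩ = (1/√3)(A⁺_{ac}A⁺_{bd} − A⁺_{ad}A⁺_{bc})|θ⟩ are orthonormal with respect to the inner product induced by the fermionic Fock space, where |θ⟩ is the vacuum. -/
open scoped InnerProductSpace

set_option maxHeartbeats 4000000 in
/-- For a < b < c < d, the seniority-four singlet vacuums
|φ⁽¹⁾⟩ = A⁺_{ab}A⁺_{cd}|θ⟩ and |φ⁽²⁾⟩ = (1/√3)(A⁺_{ac}A⁺_{bd} − A⁺_{ad}A⁺_{bc})|θ⟩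
are orthonormal in the fermionic Fock space. -/
theorem seniority_four_vacuums_orthonormal
    {I : Type*} [LinearOrder I] {H : Type*} [NormedAddCommGroup H] [InnerProductSpace ℂ H]
    (cr ann : I → Bool → H →ₗ[ℂ] H) (θ : H)
    (car : ∀ p σ q τ, cr p σ ∘ₗ ann q τ + ann q τ ∘ₗ cr p σ =
      if p = q ∧ σ = τ then (LinearMap.id : H →ₗ[ℂ] H) else 0)
    (ccr : ∀ p σ q τ, cr p σ ∘ₗ cr q τ + cr q τ ∘ₗ cr p σ = 0)
    (aar : ∀ p σ q τ, ann p σ ∘ₗ ann q τ + ann q τ ∘ₗ ann p σ = 0)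
    (hvac : ∀ p σ, ann p σ θ = 0)
    (hadj : ∀ p σ (x y : H), ⟪cr p σ x, y⟫_ℂ = ⟪x, ann p σ y⟫_ℂ)
    (hθ : ⟪θ, θ⟫_ℂ = 1)
    (Ap : I → I → H →ₗ[ℂ] H)
    (hAp : ∀ p q, Ap p q = ((Real.sqrt 2 : ℂ))⁻¹ •
      (cr p true ∘ₗ cr q false - cr p false ∘ₗ cr q true))
    (a b c d : I) (hab : a < b) (hbc : b < c) (hcd : c < d)
    (φ₁ φ₂ : H)
    (hφ₁ : φ₁ = Ap a b (Ap c d θ))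
    (hφ₂ : φ₂ = ((Real.sqrt 3 : ℂ))⁻¹ • (Ap a c (Ap b d θ) - Ap a d (Ap b c θ))) :
    ⟪φ₁, φ₁⟫_ℂ = 1 ∧ ⟪φ₂, φ₂⟫_ℂ = 1 ∧ ⟪φ₁, φ₂⟫_ℂ = 0 := by
  have key : ∀ q τ p σ (x : H), ann q τ (cr p σ x) =
      (if p = q ∧ σ = τ then x else 0) - cr p σ (ann q τ x) := by
    intro q τ p σ x
    have h := LinearMap.congr_fun (car p σ q τ) x
    simp only [LinearMap.add_apply, LinearMap.comp_apply] at h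
    rw [eq_sub_iff_add_eq, add_comm, h]
    split_ifs <;> simp
  have hac : a < c := hab.trans hbc
  have had : a < d := hac.trans hcd
  have hbd : b < d := hbc.trans hcd
  have h2 : (Real.sqrt 2 : ℂ) * Real.sqrt 2 = 2 := by
    norm_cast; exact Real.mul_self_sqrt (by norm_num)
  have h3 : (Real.sqrt 3 : ℂ) * Real.sqrt 3 = 3 := by
    norm_cast; exact Real.mul_self_sqrt (by norm_num)
  have h2sq : (Real.sqrt 2:ℂ)^2 = 2 := by rw [sq]; exact h2
  have h3sq : (Real.sqrt 3:ℂ)^2 = 3 := by rw [sq]; exact h3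
  subst hφ₁ hφ₂
  simp only [hAp, LinearMap.smul_apply, LinearMap.sub_apply, LinearMap.comp_apply,
    map_smul, map_sub, smul_sub, smul_smul]
  simp (config := { maxSteps := 10000000 }) only [inner_sub_left, inner_sub_right, inner_smul_left, inner_smul_right,
    hadj, map_sub, map_smul, key, hvac, map_zero, smul_zero, sub_zero, zero_sub,
    hab.ne, hab.ne', hbc.ne, hbc.ne', hcd.ne, hcd.ne', hac.ne, hac.ne', had.ne,
    had.ne', hbd.ne, hbd.ne', if_true, if_false, and_true, and_false, false_and,
    true_and, if_neg, reduceIte, reduceCtorEq, map_inv₀, Complex.conj_ofReal,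
    inner_smul_right, hθ, inner_zero_right, smul_eq_mul, mul_one, mul_zero, neg_zero,
    zero_smul, neg_neg, sub_neg_eq_add, zero_add, add_zero, map_add, inner_add_right,
    inner_add_left, sub_self, neg_sub, map_neg, inner_neg_right, inner_neg_left,
    smul_neg, neg_smul, mul_neg, neg_mul]
  simp only [map_mul, map_inv₀, Complex.conj_ofReal]
  refine ⟨?_, ?_⟩
  · field_simp [h2sq]
    ring_nf
    linear_combination (-(Real.sqrt 2:ℂ)^2 - 2) * h2
  · have h2ne : (Real.sqrt 2 : ℂ) ≠ 0 := by
      simpa using Real.sqrt_ne_zero'.mpr (by norm_num : (0:ℝ) < 2)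
    have h3ne : (Real.sqrt 3 : ℂ) ≠ 0 := by
      simpa using Real.sqrt_ne_zero'.mpr (by norm_num : (0:ℝ) < 3)
    field_simp
    linear_combination (-(Real.sqrt 2:ℂ)^4) * h3 + (-3*((Real.sqrt 2:ℂ)^2 + 2)) * h2
end

section
/- Let J be an N×N complex matrix, z a complex number distinct from all ε₁,…,ε_N, Λ(z) the diagonal matrix with entries g/(ε_p − z), x(z) the column vector with entries g/(ε_p − z), and 1 the all-ones column vector. Then det(J − Λ(z)) = det(J − x(z)·1ᵀ). -/
open Matrix

/-- Lemma 1: for a matrix J whose off-diagonal entries are g/(ε_p − ε_q), the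
diagonal rank-N update Λ(z) is equivalent to the rank-1 update x(z)1ᵀ. -/
theorem diagonal_update_eq_rank_one_update
    {N : ℕ} (ε : Fin N → ℂ) (hε : Function.Injective ε)
    (g : ℂ) (hg : g ≠ 0)
    (J : Matrix (Fin N) (Fin N) ℂ)
    (hJ : ∀ p q, p ≠ q → J p q = g / (ε p - ε q))
    (z : ℂ) (hz : ∀ p, z ≠ ε p) :
    (J - Matrix.diagonal (fun p => g / (ε p - z))).det =
      (J - Matrix.vecMulVec (fun p => g / (ε p - z)) (fun _ => 1)).det := by
  set A := J - Matrix.diagonal (fun p => g / (ε p - z)) with hA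
  set B := J - Matrix.vecMulVec (fun p => g / (ε p - z)) (fun _ => 1) with hB
  set D := Matrix.diagonal (fun p => ε p - z) with hD
  have hdet : D.det ≠ 0 := by
    rw [Matrix.det_diagonal]
    exact Finset.prod_ne_zero_iff.2 fun p _ => sub_ne_zero.2 (fun h => hz p h.symm)
  have key : A * D = D * B := by
    ext p q
    simp only [hA, hB, hD, Matrix.mul_apply, Matrix.diagonal_apply,
      Matrix.sub_apply, Matrix.vecMulVec_apply]
    rw [Finset.sum_eq_single q, Finset.sum_eq_single p]
    · by_cases h : p = q
      · subst h; simp only [if_true]; ring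
      · have hpq : ε p - ε q ≠ 0 := sub_ne_zero.2 fun h' => h (hε h')
        have hpz : ε p - z ≠ 0 := sub_ne_zero.2 fun h' => hz p h'.symm
        rw [hJ p q h, if_neg h, if_pos rfl, if_pos rfl]
        field_simp
        ring
    · intro b _ hb; rw [if_neg (Ne.symm hb)]; ring
    · intro h; exact absurd (Finset.mem_univ p) h
    · intro b _ hb; rw [if_neg hb]; ring
    · intro h; exact absurd (Finset.mem_univ q) h
  have := congrArg Matrix.det key
  rw [Matrix.det_mul, Matrix.det_mul] at this
  exact mul_right_cancel₀ hdet (this.trans (mul_comm _ _))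
end

section
/- For an invertible N×N matrix J̄, the scaled second cofactors satisfy Jacobi's identity: [J̄]^{pq,rs}/det(J̄) = ([J̄]^{p,r}/det J̄)([J̄]^{q,s}/det J̄) − ([J̄]^{p,s}/det J̄)([J̄]^{q,r}/det J̄), where [J̄]^{p,r} = (−1)^{p+r} det J̄^{p,r} is the first cofactor (J̄^{p,r} deletes row p and column r) and [J̄]^{pq,rs} = (−1)^{p+q+r+s+h(p,q)+h(r,s)} det J̄^{pq,rs} is the second cofactor with h(p,q)=1 if p>q and 0 if p<q. -/
/-!
Permute rows `p, q` and columns `r, s` to the front, keeping the other rows and columns in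
order; the two permutations have signs `(-1)^(p+q+h(p,q)+1)` and `(-1)^(r+s+h(r,s)+1)`.
For `M * N = 1` in block form, `M * [[N₁₁, 0], [N₂₁, 1]] = [[1, M₁₂], [0, M₂₂]]`, so
`det M * det N₁₁ = det M₂₂`: the complementary minor `J^{pq,rs}` is `det J` times a `2 × 2` minor
of `J⁻¹`, whose entries are the first cofactors divided by `det J`.
-/

open Matrix

lemma compl_pair_card {n : ℕ} {p q : Fin (n + 2)} (h : p ≠ q) :
    ({p, q}ᶜ : Finset (Fin (n + 2))).card = n := by
  rw [Finset.card_compl, Finset.card_insert_of_notMem (by simpa using h),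
    Finset.card_singleton]
  simp

/-- The (N−1)×(N−1) submatrix deleting row p and column r. -/
def delOne {n : ℕ} (J : Matrix (Fin (n + 1)) (Fin (n + 1)) ℂ) (p r : Fin (n + 1)) :
    Matrix (Fin n) (Fin n) ℂ :=
  J.submatrix p.succAbove r.succAbove

/-- First cofactor [J]^{p,r} = (−1)^{p+r} det J^{p,r}. -/
def cof1 {n : ℕ} (J : Matrix (Fin (n + 1)) (Fin (n + 1)) ℂ) (p r : Fin (n + 1)) : ℂ :=
  (-1 : ℂ) ^ ((p : ℕ) + (r : ℕ)) * (delOne J p r).det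

/-- The (N−2)×(N−2) submatrix deleting rows p,q and columns r,s. -/
def delTwo {n : ℕ} (J : Matrix (Fin (n + 2)) (Fin (n + 2)) ℂ)
    (p q r s : Fin (n + 2)) (hpq : p ≠ q) (hrs : r ≠ s) :
    Matrix (Fin n) (Fin n) ℂ :=
  J.submatrix
    (fun i => (({p, q}ᶜ : Finset (Fin (n + 2))).orderIsoOfFin (compl_pair_card hpq) i : Fin (n + 2)))
    (fun j => (({r, s}ᶜ : Finset (Fin (n + 2))).orderIsoOfFin (compl_pair_card hrs) j : Fin (n + 2)))

/-- h(p,q) = 1 if p > q, 0 if p < q. -/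
def hsgn {m : ℕ} (p q : Fin m) : ℕ := if q < p then 1 else 0

/-- Second cofactor [J]^{pq,rs} = (−1)^{p+q+r+s+h(p,q)+h(r,s)} det J^{pq,rs}. -/
def cof2 {n : ℕ} (J : Matrix (Fin (n + 2)) (Fin (n + 2)) ℂ)
    (p q r s : Fin (n + 2)) (hpq : p ≠ q) (hrs : r ≠ s) : ℂ :=
  (-1 : ℂ) ^ ((p : ℕ) + (q : ℕ) + (r : ℕ) + (s : ℕ) + hsgn p q + hsgn r s) *
    (delTwo J p q r s hpq hrs).det

namespace Matrix

variable {m n ι κ R : Type*} [Fintype m] [Fintype n] [DecidableEq m] [DecidableEq n] [CommRing R]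

theorem det_mul_det_toBlocks₁₁_of_mul_eq_one {M N : Matrix (m ⊕ n) (m ⊕ n) R} (h : M * N = 1) :
    M.det * N.toBlocks₁₁.det = M.toBlocks₂₂.det := by
  have hMN : fromBlocks M.toBlocks₁₁ M.toBlocks₁₂ M.toBlocks₂₁ M.toBlocks₂₂ *
      fromBlocks N.toBlocks₁₁ N.toBlocks₁₂ N.toBlocks₂₁ N.toBlocks₂₂ = fromBlocks 1 0 0 1 := by
    simpa only [fromBlocks_toBlocks, fromBlocks_one] using h
  rw [fromBlocks_multiply, fromBlocks_inj] at hMN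
  obtain ⟨h₁₁, -, h₂₁, -⟩ := hMN
  have hfactor : M * fromBlocks N.toBlocks₁₁ 0 N.toBlocks₂₁ 1
      = fromBlocks 1 M.toBlocks₁₂ 0 M.toBlocks₂₂ := by
    conv_lhs => rw [← fromBlocks_toBlocks M]
    rw [fromBlocks_multiply]
    simp only [Matrix.mul_zero, Matrix.mul_one, zero_add, h₁₁, h₂₁]
  simpa [det_fromBlocks_zero₁₂, det_fromBlocks_zero₂₁] using congrArg det hfactor

theorem det_submatrix_trans_perm [Fintype ι] [DecidableEq ι] [Fintype κ] [DecidableEq κ]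
    (A : Matrix ι ι R) (e : κ ≃ ι) (σ τ : Equiv.Perm ι) :
    (A.submatrix (e.trans σ) (e.trans τ)).det =
      Equiv.Perm.sign σ * Equiv.Perm.sign τ * A.det := by
  have : A.submatrix (e.trans σ) (e.trans τ) = ((A.submatrix id τ).submatrix σ id).submatrix e e :=
    rfl
  rw [this, det_submatrix_equiv_self, det_permute, det_permute', mul_assoc]

end Matrix

lemma val_succAbove_add_hsgn {m : ℕ} (p : Fin (m + 1)) (i : Fin m) :
    (p.succAbove i : ℕ) + hsgn p (p.succAbove i) = i + 1 := by
  rcases Fin.castSucc_lt_or_lt_succ p i with h | h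
  · rw [Fin.succAbove_of_castSucc_lt p i h, hsgn, if_pos h, Fin.val_castSucc]
  · rw [Fin.succAbove_of_lt_succ p i h, hsgn, if_neg (Fin.lt_asymm h), Fin.val_succ]

lemma coe_orderIsoOfFin_compl_pair {n : ℕ} (p : Fin (n + 2)) (i : Fin (n + 1))
    (h : ({p, p.succAbove i}ᶜ : Finset (Fin (n + 2))).card = n) (k : Fin n) :
    (({p, p.succAbove i}ᶜ : Finset (Fin (n + 2))).orderIsoOfFin h k : Fin (n + 2)) =
      p.succAbove (i.succAbove k) := by
  rw [Finset.coe_orderIsoOfFin_apply]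
  refine congr_fun (Finset.orderEmbOfFin_unique h (fun k => ?_)
    ((Fin.strictMono_succAbove p).comp (Fin.strictMono_succAbove i))).symm k
  simp [Fin.succAbove_ne, Fin.succAbove_right_injective.eq_iff]

section PairFrontPerm

variable {n : ℕ} (p : Fin (n + 2)) (i : Fin (n + 1))

def pairFrontPerm : Equiv.Perm (Fin (n + 2)) :=
  (Fin.cycleRange p)⁻¹ * Equiv.Perm.decomposeFin.symm (0, (Fin.cycleRange i)⁻¹)

@[simp]
lemma pairFrontPerm_zero : pairFrontPerm p i 0 = p := by
  simp [pairFrontPerm]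

@[simp]
lemma pairFrontPerm_one : pairFrontPerm p i 1 = p.succAbove i := by
  simp [pairFrontPerm, Equiv.Perm.decomposeFin_symm_apply_one]

@[simp]
lemma pairFrontPerm_succ_succ (k : Fin n) :
    pairFrontPerm p i k.succ.succ = p.succAbove (i.succAbove k) := by
  simp [pairFrontPerm]

lemma sign_pairFrontPerm {R : Type*} [Ring R] :
    ((Equiv.Perm.sign (pairFrontPerm p i) : ℤ) : R) = (-1) ^ ((p : ℕ) + i) := by
  simp [pairFrontPerm, Equiv.Perm.decomposeFin.symm_sign, Fin.sign_cycleRange, pow_add]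

end PairFrontPerm

lemma inv_apply_eq_cof1_div {n : ℕ} (J : Matrix (Fin (n + 1)) (Fin (n + 1)) ℂ)
    (x y : Fin (n + 1)) : J⁻¹ x y = cof1 J y x / J.det := by
  rw [inv_def, Ring.inverse_eq_inv', Matrix.smul_apply, smul_eq_mul,
    adjugate_fin_succ_eq_det_submatrix, cof1, delOne, inv_mul_eq_div]

theorem cof2_eq_det_mul_inv {n : ℕ} (J : Matrix (Fin (n + 2)) (Fin (n + 2)) ℂ) (hJ : IsUnit J.det)
    (p q r s : Fin (n + 2)) (hpq : p ≠ q) (hrs : r ≠ s) :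
    cof2 J p q r s hpq hrs = J.det * (J⁻¹ r p * J⁻¹ s q - J⁻¹ r q * J⁻¹ s p) := by
  obtain ⟨i, rfl⟩ := Fin.exists_succAbove_eq hpq.symm
  obtain ⟨j, rfl⟩ := Fin.exists_succAbove_eq hrs.symm
  let ι : Fin 2 ⊕ Fin n ≃ Fin (n + 2) := finSumFinEquiv.trans (finCongr (Nat.add_comm 2 n))
  have hι₀ : ι (.inl 0) = 0 := rfl
  have hι₁ : ι (.inl 1) = 1 := rfl
  have hι : ∀ k, ι (.inr k) = k.succ.succ := fun k => Fin.ext (by simp [ι])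
  let e := ι.trans (pairFrontPerm p i)
  let f := ι.trans (pairFrontPerm r j)
  have hblock := det_mul_det_toBlocks₁₁_of_mul_eq_one (M := J.submatrix e f)
    (N := J⁻¹.submatrix f e)
    (by rw [submatrix_mul_equiv, mul_nonsing_inv _ hJ, submatrix_one_equiv])
  have h₂₂ : (J.submatrix e f).toBlocks₂₂ = delTwo J _ _ _ _ hpq hrs := by
    ext k l
    simp only [toBlocks₂₂, of_apply, submatrix_apply, e, f, Equiv.trans_apply, hι,
      pairFrontPerm_succ_succ, delTwo, coe_orderIsoOfFin_compl_pair]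
  have h₁₁ : (J⁻¹.submatrix f e).toBlocks₁₁.det =
      J⁻¹ r p * J⁻¹ (r.succAbove j) (p.succAbove i) -
        J⁻¹ r (p.succAbove i) * J⁻¹ (r.succAbove j) p := by
    simp [det_fin_two, toBlocks₁₁, e, f, hι₀, hι₁]
  rw [det_submatrix_trans_perm, sign_pairFrontPerm, sign_pairFrontPerm, h₂₂, h₁₁] at hblock
  have hexp : (p : ℕ) + (p.succAbove i : ℕ) + r + (r.succAbove j : ℕ) + hsgn p (p.succAbove i) +
      hsgn r (r.succAbove j) = (p + i + (r + j)) + 2 := by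
    linarith [val_succAbove_add_hsgn p i, val_succAbove_add_hsgn r j]
  rw [← pow_add] at hblock
  rw [cof2, hexp, ← hblock, ← mul_assoc, ← mul_assoc, ← pow_add,
    Even.neg_one_pow ⟨p + i + (r + j) + 1, by ring⟩, one_mul]

/-- Jacobi's identity for scaled second cofactors of an invertible matrix. -/
theorem jacobi_second_cofactor_identity
    {n : ℕ} (J : Matrix (Fin (n + 2)) (Fin (n + 2)) ℂ) (hJ : IsUnit J.det)
    (p q r s : Fin (n + 2)) (hpq : p ≠ q) (hrs : r ≠ s) :
    cof2 J p q r s hpq hrs / J.det =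
      (cof1 J p r / J.det) * (cof1 J q s / J.det) -
        (cof1 J p s / J.det) * (cof1 J q r / J.det) := by
  rw [cof2_eq_det_mul_inv J hJ, mul_div_cancel_left₀ _ hJ.ne_zero, inv_apply_eq_cof1_div J r p,
    inv_apply_eq_cof1_div J s q, inv_apply_eq_cof1_div J r q, inv_apply_eq_cof1_div J s p,
    mul_comm (cof1 J q r / J.det)]
end
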